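/- Let C : D(C) ⊆ H → Y be a closed densely-defined linear operator between Hilbert spaces, and B : Y → X a bounded linear operator such that C*B* is densely defined. Then the closure of BC equals (C*B*)*. -/

import Mathlib

open LinearPMap

variable {H Y X : Type*}
  [NormedAddCommGroup H] [InnerProductSpace ℝ H] [CompleteSpace H]
  [NormedAddCommGroup Y] [InnerProductSpace ℝ Y] [CompleteSpace Y]
  [NormedAddCommGroup X] [InnerProductSpace ℝ X] [CompleteSpace X]

/-- The composition `B ∘ C` of a bounded operator `B` with a partially defined operator `C`;
its domain is `D(C)`. -/
noncomputable def clmCompPMap (B : Y →L[ℝ] X) (C : H →ₗ.[ℝ] Y) : H →ₗ.[ℝ] X :=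
  { domain := C.domain
    toFun := (B : Y →ₗ[ℝ] X).comp C.toFun }

/-- The composition `T ∘ B` of a partially defined operator `T` with a bounded operator `B`;
its domain is `{x | B x ∈ D(T)}`. -/
noncomputable def pMapCompCLM (T : Y →ₗ.[ℝ] H) (B : X →L[ℝ] Y) : X →ₗ.[ℝ] H :=
  { domain := T.domain.comap (B : X →ₗ[ℝ] Y)
    toFun := T.toFun.comp ((B : X →ₗ[ℝ] Y).restrict fun _ hx => hx) }

/-! The graph of `T†` is the orthogonal complement of the rotated graph of `T` in the Hilbert
sum `E ⊕₂ F`, so the graph of `T††` is the double orthogonal complement of the graph of `T`,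
that is, its closure. Hence a densely defined `T` whose adjoint is densely defined is closable
with closure `T††`. For bounded `B` one has `(BC)† = C†B*`, and the theorem is this fact for
`T = BC`. -/

section

variable {𝕜 E F : Type*} [RCLike 𝕜]
  [NormedAddCommGroup E] [InnerProductSpace 𝕜 E]
  [NormedAddCommGroup F] [InnerProductSpace 𝕜 F]

namespace Submodule

def toProdL2 (g : Submodule 𝕜 (E × F)) : Submodule 𝕜 (WithLp 2 (E × F)) :=
  g.comap (WithLp.linearEquiv 2 𝕜 (E × F)).toLinearMap

theorem coe_toProdL2 (g : Submodule 𝕜 (E × F)) :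
    (g.toProdL2 : Set (WithLp 2 (E × F))) = WithLp.prodContinuousLinearEquiv 2 𝕜 E F ⁻¹' g :=
  rfl

theorem mem_toProdL2_orthogonal_iff (g : Submodule 𝕜 (E × F)) (w : WithLp 2 (E × F)) :
    w ∈ g.toProdL2ᗮ ↔ (w.snd, -w.fst) ∈ g.adjoint := by
  simp only [toProdL2, mem_adjoint_iff, mem_orthogonal, mem_comap, LinearEquiv.coe_coe,
    WithLp.linearEquiv_apply, WithLp.prod_inner_apply, WithLp.ofLp_fst, WithLp.ofLp_snd,
    inner_neg_right, sub_neg_eq_add]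
  refine ⟨fun h a b hab => ?_, fun h u hu => ?_⟩
  · simpa [add_comm] using h (WithLp.toLp 2 (a, b)) hab
  · simpa [add_comm] using h _ _ hu

theorem mem_adjoint_adjoint_iff (g : Submodule 𝕜 (E × F)) (x : E × F) :
    x ∈ g.adjoint.adjoint ↔ WithLp.toLp 2 x ∈ g.toProdL2ᗮᗮ := by
  rw [mem_adjoint_iff, mem_orthogonal]
  constructor
  · intro h w hw
    have hwx := h _ _ ((mem_toProdL2_orthogonal_iff g w).1 hw)
    rw [WithLp.prod_inner_apply]
    simp only [inner_neg_left, WithLp.ofLp_fst, WithLp.ofLp_snd] at hwx ⊢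
    linear_combination -hwx
  · intro h a b hab
    have hbx := h (WithLp.toLp 2 (-b, a)) ((mem_toProdL2_orthogonal_iff g _).2 (by simpa using hab))
    simp only [WithLp.prod_inner_apply, inner_neg_left] at hbx
    linear_combination -hbx

end Submodule

variable [CompleteSpace E] [CompleteSpace F]

theorem Submodule.adjoint_adjoint (g : Submodule 𝕜 (E × F)) :
    g.adjoint.adjoint = g.topologicalClosure := by
  ext x
  rw [mem_adjoint_adjoint_iff, orthogonal_orthogonal_eq_closure, ← SetLike.mem_coe,
    topologicalClosure_coe, coe_toProdL2, ← ContinuousLinearEquiv.preimage_closure]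
  rfl

namespace LinearPMap

variable {T : E →ₗ.[𝕜] F}

theorem graph_adjoint_adjoint (hT : Dense (T.domain : Set E))
    (hT' : Dense (T†.domain : Set F)) : T††.graph = T.graph.topologicalClosure := by
  rw [adjoint_graph_eq_graph_adjoint hT', adjoint_graph_eq_graph_adjoint hT,
    Submodule.adjoint_adjoint]

theorem isClosable_of_dense_adjoint_domain (hT : Dense (T.domain : Set E))
    (hT' : Dense (T†.domain : Set F)) : T.IsClosable :=
  ⟨T††, (graph_adjoint_adjoint hT hT').symm⟩

theorem closure_eq_adjoint_adjoint (hT : Dense (T.domain : Set E))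
    (hT' : Dense (T†.domain : Set F)) : T.closure = T†† :=
  eq_of_eq_graph <| by
    rw [← (isClosable_of_dense_adjoint_domain hT hT').graph_closure_eq_closure_graph,
      graph_adjoint_adjoint hT hT']

end LinearPMap

end

theorem adjoint_clmCompPMap {C : H →ₗ.[ℝ] Y} (hC : Dense (C.domain : Set H)) (B : Y →L[ℝ] X) :
    (clmCompPMap B C)† = pMapCompCLM C† (ContinuousLinearMap.adjoint B) := by
  have hBC : Dense ((clmCompPMap B C).domain : Set H) := hC
  have hle : pMapCompCLM C† (ContinuousLinearMap.adjoint B) ≤ (clmCompPMap B C)† := by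
    refine IsFormalAdjoint.le_adjoint hBC fun u v => ?_
    change inner ℝ (B (C u)) (v : X) =
      inner ℝ (u : H) (C† ⟨ContinuousLinearMap.adjoint B v, v.2⟩)
    rw [← ContinuousLinearMap.adjoint_inner_right]
    exact (adjoint_isFormalAdjoint hC).symm u ⟨ContinuousLinearMap.adjoint B v, v.2⟩
  have hdom : (clmCompPMap B C)†.domain ≤
      (pMapCompCLM C† (ContinuousLinearMap.adjoint B)).domain := fun x hx =>
    mem_adjoint_domain_of_exists _ ⟨(clmCompPMap B C)† ⟨x, hx⟩, fun u =>
      (adjoint_isFormalAdjoint hBC ⟨x, hx⟩ u).trans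
        (ContinuousLinearMap.adjoint_inner_left B (C u) x).symm⟩
  exact (eq_of_le_of_domain_eq hle (le_antisymm hle.1 hdom)).symm

theorem closure_clm_comp_eq_adjoint_general (C : H →ₗ.[ℝ] Y)
    (hCdense : Dense (C.domain : Set H)) (B : Y →L[ℝ] X)
    (hdense : Dense ((pMapCompCLM C.adjoint (ContinuousLinearMap.adjoint B)).domain : Set X)) :
    (clmCompPMap B C).IsClosable ∧
      (clmCompPMap B C).closure =
        (pMapCompCLM C.adjoint (ContinuousLinearMap.adjoint B)).adjoint := by
  have hadj := adjoint_clmCompPMap hCdense B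
  have hBC : Dense ((clmCompPMap B C).domain : Set H) := hCdense
  rw [← hadj] at hdense ⊢
  exact ⟨isClosable_of_dense_adjoint_domain hBC hdense, closure_eq_adjoint_adjoint hBC hdense⟩

/-- If `C` is a closed densely defined operator from `H` to `Y`, `B : Y → X` is bounded, and
`C* B*` is densely defined, then `BC` is closable and its closure equals `(C* B*)*`. -/
theorem closure_clm_comp_eq_adjoint (C : H →ₗ.[ℝ] Y) (hC : C.IsClosed)
    (hCdense : Dense (C.domain : Set H)) (B : Y →L[ℝ] X)
    (hdense : Dense ((pMapCompCLM C.adjoint (ContinuousLinearMap.adjoint B)).domain : Set X)) :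
    (clmCompPMap B C).IsClosable ∧
      (clmCompPMap B C).closure =
        (pMapCompCLM C.adjoint (ContinuousLinearMap.adjoint B)).adjoint :=
  closure_clm_comp_eq_adjoint_general C hCdense B hdense
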